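/- Let s ∈ S⁺ and let v = (v_1,…,v_p) ∈ AP(s) with v < 1_s. Then m(v|1_s) = −Σ m(v|u), where the sum runs over all dual atoms u = (u_1,u_2) of AP(s) (admissible partitions of s with exactly two blocks) such that v_1 ⊆ u_1 and v_2 ⊆ u_2, i.e., such that the first two blocks of v are separated in u. -/
import Mathlib


/-- The two-letter alphabet `{z, w}`. -/
inductive Letter | z | w
deriving DecidableEq

/-- Words: elements of the free monoid `S = FS({z,w})`. -/
abbrev Word := List Letter

/-- The letter of `s` at position `j` (defaulting to `z`). -/
def letterAt (s : Word) (j : ℕ) : Letter := s.getD j Letter.z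

/-- `P` is a partition of the finite set of positions `g ⊆ ℕ` into nonempty blocks. -/
def IsPartitionOn (g : Finset ℕ) (P : Finset (Finset ℕ)) : Prop :=
  (∀ b ∈ P, b.Nonempty) ∧ (P : Set (Finset ℕ)).PairwiseDisjoint id ∧ P.sup id = g

/-- The position `j` is inner with respect to the block `b`:
`j ∉ b` and `min b < j < max b`. -/
def InnerPos (j : ℕ) (b : Finset ℕ) : Prop :=
  j ∉ b ∧ ∃ i ∈ b, ∃ k ∈ b, i < j ∧ j < k

/-- A partition is admissible if no block contains a letter `w` that is inner
with respect to another block. -/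
def Admissible (s : Word) (P : Finset (Finset ℕ)) : Prop :=
  ∀ b ∈ P, ∀ b' ∈ P, b ≠ b' → ∀ j ∈ b, letterAt s j = Letter.w → ¬ InnerPos j b'

open scoped Classical in
/-- The set `AP(s)` of admissible partitions of the positions `g` of the word `s`. -/
noncomputable def APfin (s : Word) (g : Finset ℕ) : Finset (Finset (Finset ℕ)) :=
  g.powerset.powerset.filter fun P => IsPartitionOn g P ∧ Admissible s P

/-- The subword of `s` determined by a set of positions `b`. -/
def wordOf (s : Word) (b : Finset ℕ) : Word :=
  (b.sort (· ≤ ·)).map (letterAt s)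

/-- `L` is the family of admissible cumulants of the moment function `M`:
`M(s) = Σ_{u ∈ AP(s)} L(u₁)⋯L(u_p)` for every nonempty word `s`. -/
def IsCumulants (M L : Word → ℂ) : Prop :=
  ∀ s : Word, s ≠ [] →
    M s = ∑ P ∈ APfin s (Finset.range s.length), ∏ b ∈ P, L (wordOf s b)

/-- `P` refines `Q`: every block of `P` is contained in a block of `Q`. -/
def Refines (P Q : Finset (Finset ℕ)) : Prop := ∀ b ∈ P, ∃ c ∈ Q, b ⊆ c

open scoped Classical in
/-- `m` is the Möbius function of the lattice `AP(s)` of admissible partitions of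
the position set `g` of `s`: `m(u|u) = 1` and `m(u|v) = −Σ_{u ≤ t < v} m(u|t)`. -/
noncomputable def IsMobius (s : Word) (g : Finset ℕ)
    (m : Finset (Finset ℕ) → Finset (Finset ℕ) → ℂ) : Prop :=
  (∀ u ∈ APfin s g, m u u = 1) ∧
    ∀ u ∈ APfin s g, ∀ v ∈ APfin s g, Refines u v → u ≠ v →
      m u v = -∑ t ∈ (APfin s g).filter fun t => Refines u t ∧ Refines t v ∧ t ≠ v, m u t

-- ================== my auxiliary development ==================
open scoped Classical
open Finset

namespace APAux

variable {s : Word} {g : Finset ℕ} {P Q R : Finset (Finset ℕ)}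

theorem mem_APfin : P ∈ APfin s g ↔ IsPartitionOn g P ∧ Admissible s P := by
  simp only [APfin, Finset.mem_filter, Finset.mem_powerset, and_iff_right_iff_imp]
  rintro ⟨hP, -⟩ b hb
  exact Finset.mem_powerset.2 (hP.2.2 ▸ Finset.le_sup (f := id) hb)

theorem block_sub (hP : IsPartitionOn g P) {b : Finset ℕ} (hb : b ∈ P) : b ⊆ g :=
  hP.2.2 ▸ Finset.le_sup (f := id) hb

theorem exists_block (hP : IsPartitionOn g P) {p : ℕ} (hp : p ∈ g) : ∃ b ∈ P, p ∈ b := by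
  rw [← hP.2.2] at hp
  simpa using (Finset.mem_sup.1 hp)

theorem block_unique (hP : IsPartitionOn g P) {b b' : Finset ℕ} (hb : b ∈ P) (hb' : b' ∈ P)
    {p : ℕ} (hpb : p ∈ b) (hpb' : p ∈ b') : b = b' := by
  by_contra hne
  exact Finset.disjoint_left.1 (hP.2.1 hb hb' hne) hpb hpb'

theorem top_partition (hg : g.Nonempty) : IsPartitionOn g {g} := by
  refine ⟨by simpa using hg, ?_, by simp⟩
  simp [Set.PairwiseDisjoint, Set.Pairwise]

theorem top_admissible : Admissible s {g} := by
  intro b hb b' hb' hne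
  simp only [Finset.mem_singleton] at hb hb'
  exact absurd (hb.trans hb'.symm) hne

theorem top_mem_APfin (hg : g.Nonempty) : {g} ∈ APfin s g :=
  mem_APfin.2 ⟨top_partition hg, top_admissible⟩

theorem refines_refl (P : Finset (Finset ℕ)) : Refines P P :=
  fun b hb => ⟨b, hb, Finset.Subset.refl b⟩

theorem refines_trans (h1 : Refines P Q) (h2 : Refines Q R) : Refines P R := by
  intro b hb
  obtain ⟨c, hc, hbc⟩ := h1 b hb
  obtain ⟨d, hd, hcd⟩ := h2 c hc
  exact ⟨d, hd, hbc.trans hcd⟩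

theorem refines_antisymm (hP : IsPartitionOn g P) (hQ : IsPartitionOn g Q)
    (h1 : Refines P Q) (h2 : Refines Q P) : P = Q := by
  have key : ∀ (A B : Finset (Finset ℕ)), IsPartitionOn g A → Refines A B → Refines B A →
      A ⊆ B := by
    intro A B hA hAB hBA b hb
    obtain ⟨c, hc, hbc⟩ := hAB b hb
    obtain ⟨b', hb', hcb'⟩ := hBA c hc
    obtain ⟨p, hp⟩ := hA.1 b hb
    have hbb' : b = b' := block_unique hA hb hb' hp (hcb' (hbc hp))
    have : b = c := Finset.Subset.antisymm hbc (hbb' ▸ hcb')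
    rwa [this]
  exact Finset.Subset.antisymm (key P Q hP h1 h2) (key Q P hQ h2 h1)

theorem refines_top (hP : IsPartitionOn g P) : Refines P {g} :=
  fun b hb => ⟨g, Finset.mem_singleton_self g, block_sub hP hb⟩

theorem eq_top_of_refines_top (hQ : IsPartitionOn g Q) (hg : g.Nonempty)
    (h : Refines {g} Q) : Q = {g} :=
  refines_antisymm hQ (top_partition hg) (fun b hb => ⟨g, Finset.mem_singleton_self g,
    block_sub hQ hb⟩) h

/-- a coarsening of a 2-block partition is itself or the top. -/
theorem coarsen_two_blocks (hP : IsPartitionOn g P) (hQ : IsPartitionOn g Q)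
    (hcard : P.card = 2) (h : Refines P Q) (hne : Q ≠ P) : Q = {g} := by
  obtain ⟨d₁, d₂, hd, rfl⟩ := Finset.card_eq_two.1 hcard
  have hd₁ : d₁ ∈ ({d₁, d₂} : Finset (Finset ℕ)) := by simp
  have hd₂ : d₂ ∈ ({d₁, d₂} : Finset (Finset ℕ)) := by simp
  obtain ⟨e₁, he₁, h1⟩ := h d₁ hd₁
  obtain ⟨e₂, he₂, h2⟩ := h d₂ hd₂
  have hg12 : d₁ ∪ d₂ = g := by
    have := hP.2.2; simpa [Finset.sup_insert, Finset.sup_singleton] using this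
  by_cases he : e₁ = e₂
  · -- Q has a block containing everything
    subst he
    have : g ⊆ e₁ := by rw [← hg12]; exact Finset.union_subset h1 h2
    have heg : e₁ = g := Finset.Subset.antisymm (block_sub hQ he₁) this
    subst heg
    -- every other block of Q is empty
    apply Finset.eq_singleton_iff_unique_mem.2
    refine ⟨he₁, fun b hb => ?_⟩
    by_contra hbe
    obtain ⟨p, hp⟩ := hQ.1 b hb
    exact absurd (block_unique hQ hb he₁ hp (block_sub hQ hb hp)) hbe
  · exfalso
    apply hne
    -- show Q = {d₁, d₂}
    have he₁d : e₁ = d₁ := by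
      refine Finset.Subset.antisymm ?_ h1
      intro p hp
      have hpg : p ∈ g := block_sub hQ he₁ hp
      rw [← hg12] at hpg
      rcases Finset.mem_union.1 hpg with h' | h'
      · exact h'
      · exact absurd (block_unique hQ he₁ he₂ hp (h2 h')) he
    have he₂d : e₂ = d₂ := by
      refine Finset.Subset.antisymm ?_ h2
      intro p hp
      have hpg : p ∈ g := block_sub hQ he₂ hp
      rw [← hg12] at hpg
      rcases Finset.mem_union.1 hpg with h' | h'
      · exact absurd (block_unique hQ he₂ he₁ hp (h1 h')) (Ne.symm he)
      · exact h'
    apply Finset.Subset.antisymm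
    · intro b hb
      obtain ⟨p, hp⟩ := hQ.1 b hb
      have hpg : p ∈ g := block_sub hQ hb hp
      rw [← hg12] at hpg
      rcases Finset.mem_union.1 hpg with h' | h'
      · rw [block_unique hQ hb he₁ hp (he₁d ▸ h')]; simp [he₁d]
      · rw [block_unique hQ hb he₂ hp (he₂d ▸ h')]; simp [he₂d]
    · intro b hb
      rcases Finset.mem_insert.1 hb with rfl | hb
      · exact he₁d ▸ he₁
      · rw [Finset.mem_singleton.1 hb]; exact he₂d ▸ he₂


/-- The common refinement (meet) of a family of partitions of `g`. -/
noncomputable def meetF (S : Finset (Finset (Finset ℕ))) (g : Finset ℕ) :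
    Finset (Finset ℕ) :=
  g.image fun p => g.filter fun q => ∀ P ∈ S, ∀ b ∈ P, p ∈ b → q ∈ b

variable {S : Finset (Finset (Finset ℕ))}

/-- the defining relation of the meet is symmetric (for families of partitions). -/
theorem meet_rel_symm (hS : ∀ P ∈ S, IsPartitionOn g P) {p q : ℕ} (hp : p ∈ g)
    (h : ∀ P ∈ S, ∀ b ∈ P, p ∈ b → q ∈ b) : ∀ P ∈ S, ∀ b ∈ P, q ∈ b → p ∈ b := by
  intro P hP b hb hqb
  obtain ⟨b', hb', hpb'⟩ := exists_block (hS P hP) hp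
  have : b' = b := block_unique (hS P hP) hb' hb (h P hP b' hb' hpb') hqb
  exact this ▸ hpb'

theorem mem_meet_block_self (hp : p ∈ g) :
    p ∈ g.filter fun q => ∀ P ∈ S, ∀ b ∈ P, p ∈ b → q ∈ b := by
  simp only [Finset.mem_filter]
  exact ⟨hp, fun P hP b hb h => h⟩

theorem meet_block_eq (hS : ∀ P ∈ S, IsPartitionOn g P) {p q : ℕ} (hp : p ∈ g) (hq : q ∈ g)
    (h : ∀ P ∈ S, ∀ b ∈ P, p ∈ b → q ∈ b) :
    (g.filter fun r => ∀ P ∈ S, ∀ b ∈ P, p ∈ b → r ∈ b) =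
      (g.filter fun r => ∀ P ∈ S, ∀ b ∈ P, q ∈ b → r ∈ b) := by
  have h' := meet_rel_symm hS hp h
  ext r
  simp only [Finset.mem_filter, and_congr_right_iff]
  intro _
  constructor
  · intro hr P hP b hb hqb
    exact hr P hP b hb (h' P hP b hb hqb)
  · intro hr P hP b hb hpb
    exact hr P hP b hb (h P hP b hb hpb)

theorem meet_partition (hS : ∀ P ∈ S, IsPartitionOn g P) : IsPartitionOn g (meetF S g) := by
  refine ⟨?_, ?_, ?_⟩
  · intro b hb
    obtain ⟨p, hp, rfl⟩ := Finset.mem_image.1 hb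
    exact ⟨p, mem_meet_block_self hp⟩
  · intro b hb b' hb' hne
    simp only [meetF, Finset.coe_image, Set.mem_image, Finset.mem_coe] at hb hb'
    obtain ⟨p, hp, rfl⟩ := hb
    obtain ⟨q, hq, rfl⟩ := hb'
    apply Finset.disjoint_left.2
    intro r hr hr'
    apply hne
    have h1 := Finset.mem_filter.1 hr
    have h2 := Finset.mem_filter.1 hr'
    exact (meet_block_eq hS hp h1.1 h1.2).trans (meet_block_eq hS hq h1.1 h2.2).symm
  · apply Finset.Subset.antisymm
    · intro p hp
      rw [Finset.mem_sup] at hp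
      obtain ⟨b, hb, hpb⟩ := hp
      obtain ⟨q, hq, rfl⟩ := Finset.mem_image.1 hb
      exact (Finset.mem_filter.1 hpb).1
    · intro p hp
      rw [Finset.mem_sup]
      exact ⟨_, Finset.mem_image_of_mem _ hp, mem_meet_block_self hp⟩

theorem meet_admissible {s : Word} (hS : ∀ P ∈ S, IsPartitionOn g P)
    (hSa : ∀ P ∈ S, Admissible s P) : Admissible s (meetF S g) := by
  intro B hB B' hB' hne j hjB hw hinner
  obtain ⟨p, hp, rfl⟩ := Finset.mem_image.1 hB
  obtain ⟨p', hp', rfl⟩ := Finset.mem_image.1 hB'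
  obtain ⟨hjnot, i, hi, k, hk, hij, hjk⟩ := hinner
  simp only [Finset.mem_filter, not_and, not_forall] at hjnot
  have hjg : j ∈ g := (Finset.mem_filter.1 hjB).1
  obtain ⟨P, hPS, b, hb, hp'b, hjb⟩ := hjnot hjg
  -- j lies in some block b₂ of P, distinct from b
  obtain ⟨b₂, hb₂, hjb₂⟩ := exists_block (hS P hPS) hjg
  have hne₂ : b₂ ≠ b := fun h => hjb (h ▸ hjb₂)
  apply hSa P hPS b₂ hb₂ b hb hne₂ j hjb₂ hw
  refine ⟨hjb, i, ?_, k, ?_, hij, hjk⟩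
  · exact (Finset.mem_filter.1 hi).2 P hPS b hb hp'b
  · exact (Finset.mem_filter.1 hk).2 P hPS b hb hp'b

theorem meet_refines (hS : ∀ P ∈ S, IsPartitionOn g P) {P : Finset (Finset ℕ)} (hP : P ∈ S) :
    Refines (meetF S g) P := by
  intro B hB
  obtain ⟨p, hp, rfl⟩ := Finset.mem_image.1 hB
  obtain ⟨b, hb, hpb⟩ := exists_block (hS P hP) hp
  refine ⟨b, hb, fun q hq => ?_⟩
  exact (Finset.mem_filter.1 hq).2 P hP b hb hpb

theorem refines_meet (hS : ∀ P ∈ S, IsPartitionOn g P) {Q : Finset (Finset ℕ)}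
    (hQ : IsPartitionOn g Q) (h : ∀ P ∈ S, Refines Q P) : Refines Q (meetF S g) := by
  intro b hb
  obtain ⟨p, hp⟩ := hQ.1 b hb
  have hpg : p ∈ g := block_sub hQ hb hp
  refine ⟨_, Finset.mem_image_of_mem _ hpg, fun q hq => ?_⟩
  simp only [Finset.mem_filter]
  refine ⟨block_sub hQ hb hq, fun P hP c hc hpc => ?_⟩
  obtain ⟨c', hc', hbc'⟩ := h P hP b hb
  have : c' = c := block_unique (hS P hP) hc' hc (hbc' hp) hpc
  exact this ▸ hbc' hq


/-- the set of common admissible upper bounds -/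
noncomputable def ubF (s : Word) (g : Finset ℕ) (x a : Finset (Finset ℕ)) :
    Finset (Finset (Finset ℕ)) :=
  (APfin s g).filter fun y => Refines x y ∧ Refines a y

/-- the join of two admissible partitions -/
noncomputable def joinF (s : Word) (g : Finset ℕ) (x a : Finset (Finset ℕ)) :
    Finset (Finset ℕ) :=
  meetF (ubF s g x a) g

variable {x a y : Finset (Finset ℕ)}

theorem ubF_partitions : ∀ P ∈ ubF s g x a, IsPartitionOn g P := by
  intro P hP
  exact (mem_APfin.1 (Finset.mem_filter.1 hP).1).1

theorem joinF_mem (hx : IsPartitionOn g x) (ha : IsPartitionOn g a) :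
    joinF s g x a ∈ APfin s g := by
  refine mem_APfin.2 ⟨meet_partition ubF_partitions, meet_admissible ubF_partitions ?_⟩
  intro P hP
  exact (mem_APfin.1 (Finset.mem_filter.1 hP).1).2

theorem refines_joinF_left (hx : IsPartitionOn g x) : Refines x (joinF s g x a) :=
  refines_meet ubF_partitions hx fun P hP => (Finset.mem_filter.1 hP).2.1

theorem refines_joinF_right (ha : IsPartitionOn g a) : Refines a (joinF s g x a) :=
  refines_meet ubF_partitions ha fun P hP => (Finset.mem_filter.1 hP).2.2

theorem joinF_le (hy : y ∈ APfin s g) (h1 : Refines x y) (h2 : Refines a y) :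
    Refines (joinF s g x a) y :=
  meet_refines ubF_partitions (Finset.mem_filter.2 ⟨hy, h1, h2⟩)

theorem joinF_eq_self (hx : x ∈ APfin s g) (ha : Refines a x) : joinF s g x a = x :=
  refines_antisymm (meet_partition ubF_partitions) (mem_APfin.1 hx).1
    (joinF_le hx (refines_refl x) ha) (refines_joinF_left (mem_APfin.1 hx).1)

/-- the sum of the Möbius function over a closed interval `[v, y]` vanishes. -/
theorem sum_interval_zero {s : Word} {g : Finset ℕ}
    {m : Finset (Finset ℕ) → Finset (Finset ℕ) → ℂ} (hm : IsMobius s g m)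
    {v y : Finset (Finset ℕ)} (hv : v ∈ APfin s g) (hy : y ∈ APfin s g)
    (hvy : Refines v y) (hne : v ≠ y) :
    ∑ t ∈ (APfin s g).filter (fun t => Refines v t ∧ Refines t y), m v t = 0 := by
  have hrec := hm.2 v hv y hy hvy hne
  have hyy : y ∈ (APfin s g).filter (fun t => Refines v t ∧ Refines t y) :=
    Finset.mem_filter.2 ⟨hy, hvy, refines_refl y⟩
  rw [← Finset.add_sum_erase _ _ hyy, hrec]
  have : ((APfin s g).filter (fun t => Refines v t ∧ Refines t y)).erase y =
      (APfin s g).filter fun t => Refines v t ∧ Refines t y ∧ t ≠ y := by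
    ext t
    simp only [Finset.mem_erase, Finset.mem_filter]
    tauto
  rw [this]
  ring

/-- Weisner-type theorem: for `a > v` in `AP(s,g)`, the sum of `m v x` over the
elements `x ≥ v` whose join with `a` equals a fixed `y ≥ a` vanishes. -/
theorem weisner {s : Word} {g : Finset ℕ}
    {m : Finset (Finset ℕ) → Finset (Finset ℕ) → ℂ} (hm : IsMobius s g m)
    {v a : Finset (Finset ℕ)} (hv : v ∈ APfin s g) (ha : a ∈ APfin s g)
    (hva : Refines v a) (hne : v ≠ a) :
    ∀ (n : ℕ) (y : Finset (Finset ℕ)), y ∈ APfin s g → Refines a y →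
      ((APfin s g).filter fun y' => Refines a y' ∧ Refines y' y).card ≤ n →
      ∑ x ∈ (APfin s g).filter (fun x => Refines v x ∧ joinF s g x a = y), m v x = 0 := by
  intro n
  induction n with
  | zero =>
    intro y hy hay hcard
    exfalso
    have : y ∈ (APfin s g).filter fun y' => Refines a y' ∧ Refines y' y :=
      Finset.mem_filter.2 ⟨hy, hay, refines_refl y⟩
    have := Finset.card_pos.2 ⟨y, this⟩
    omega
  | succ n IH =>
    intro y hy hay hcard
    -- notation
    set T := (APfin s g).filter fun y' => Refines a y' ∧ Refines y' y with hT
    have hyT : y ∈ T := Finset.mem_filter.2 ⟨hy, hay, refines_refl y⟩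
    -- the closed-interval sum
    set Sfin := (APfin s g).filter fun x => Refines v x ∧ Refines x y with hS
    have hvney : v ≠ y := by
      rintro rfl
      exact hne (refines_antisymm (mem_APfin.1 hv).1 (mem_APfin.1 ha).1 hva hay)
    have hsum0 : ∑ x ∈ Sfin, m v x = 0 :=
      sum_interval_zero hm hv hy (refines_trans hva hay) hvney
    -- fiber decomposition
    have hmaps : ∀ x ∈ Sfin, joinF s g x a ∈ T := by
      intro x hx
      obtain ⟨hxAP, hvx, hxy⟩ := Finset.mem_filter.1 hx
      refine Finset.mem_filter.2 ⟨joinF_mem (mem_APfin.1 hxAP).1 (mem_APfin.1 ha).1,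
        refines_joinF_right (mem_APfin.1 ha).1, joinF_le hy hxy hay⟩
    have hfiber := Finset.sum_fiberwise_of_maps_to hmaps (m v)
    -- identify the fibers
    have hfib_eq : ∀ y' ∈ T, Sfin.filter (fun x => joinF s g x a = y') =
        (APfin s g).filter fun x => Refines v x ∧ joinF s g x a = y' := by
      intro y' hy'
      obtain ⟨hy'AP, hay', hy'y⟩ := Finset.mem_filter.1 hy'
      ext x
      simp only [hS, Finset.mem_filter]
      constructor
      · rintro ⟨⟨hxAP, hvx, _⟩, hj⟩
        exact ⟨hxAP, hvx, hj⟩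
      · rintro ⟨hxAP, hvx, hj⟩
        have hxy' : Refines x y' := hj ▸ refines_joinF_left (mem_APfin.1 hxAP).1
        exact ⟨⟨hxAP, hvx, refines_trans hxy' hy'y⟩, hj⟩
    -- all fibers over y' ≠ y vanish by induction
    have hIH : ∀ y' ∈ T, y' ≠ y →
        ∑ x ∈ Sfin.filter (fun x => joinF s g x a = y'), m v x = 0 := by
      intro y' hy' hy'ne
      obtain ⟨hy'AP, hay', hy'y⟩ := Finset.mem_filter.1 hy'
      rw [hfib_eq y' hy']
      apply IH y' hy'AP hay'
      -- the interval below y' is strictly smaller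
      have hsub : (APfin s g).filter (fun y'' => Refines a y'' ∧ Refines y'' y') ⊆
          T.erase y := by
        intro y'' hy''
        obtain ⟨h1, h2, h3⟩ := Finset.mem_filter.1 hy''
        refine Finset.mem_erase.2 ⟨?_, Finset.mem_filter.2 ⟨h1, h2, refines_trans h3 hy'y⟩⟩
        rintro rfl
        exact hy'ne (refines_antisymm (mem_APfin.1 hy'AP).1 (mem_APfin.1 hy).1 hy'y h3)
      calc ((APfin s g).filter fun y'' => Refines a y'' ∧ Refines y'' y').card
          ≤ (T.erase y).card := Finset.card_le_card hsub
        _ ≤ n := by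
            have := Finset.card_erase_of_mem hyT
            omega
    -- conclude
    have : ∑ y' ∈ T, ∑ x ∈ Sfin.filter (fun x => joinF s g x a = y'), m v x = 0 := by
      rw [hfiber]; exact hsum0
    rw [← Finset.add_sum_erase _ _ hyT] at this
    rw [Finset.sum_eq_zero (fun y' hy' => hIH y' (Finset.mem_erase.1 hy').2
      (Finset.mem_erase.1 hy').1), add_zero] at this
    rw [← hfib_eq y hyT]
    exact this


theorem admissible_subset {s : Word} {P Q : Finset (Finset ℕ)} (hP : Admissible s P)
    (hQP : Q ⊆ P) : Admissible s Q :=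
  fun b hb b' hb' hne => hP b (hQP hb) b' (hQP hb') hne

theorem eq_top_of_top_mem (hu : IsPartitionOn g P) (h : g ∈ P) : P = {g} := by
  apply Finset.eq_singleton_iff_unique_mem.2
  refine ⟨h, fun b hb => ?_⟩
  obtain ⟨p, hp⟩ := hu.1 b hb
  exact block_unique hu hb h hp (block_sub hu hb hp)

theorem restrict_partition {v u : Finset (Finset ℕ)} (hv : IsPartitionOn g v)
    (hu : IsPartitionOn g u) (hvu : Refines v u) {c : Finset ℕ} (hc : c ∈ u) :
    IsPartitionOn c (v.filter fun b => b ⊆ c) := by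
  refine ⟨fun b hb => hv.1 b (Finset.mem_filter.1 hb).1, ?_, ?_⟩
  · intro b hb b' hb' hne
    exact hv.2.1 (Finset.mem_coe.2 (Finset.filter_subset _ _ (Finset.mem_coe.1 hb)))
      (Finset.mem_coe.2 (Finset.filter_subset _ _ (Finset.mem_coe.1 hb'))) hne
  · apply Finset.Subset.antisymm
    · intro p hp
      rw [Finset.mem_sup] at hp
      obtain ⟨b, hb, hpb⟩ := hp
      exact (Finset.mem_filter.1 hb).2 hpb
    · intro p hp
      obtain ⟨b, hb, hpb⟩ := exists_block hv (block_sub hu hc hp)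
      obtain ⟨c', hc', hbc'⟩ := hvu b hb
      have : c' = c := block_unique hu hc' hc (hbc' hpb) hp
      rw [Finset.mem_sup]
      exact ⟨b, Finset.mem_filter.2 ⟨hb, this ▸ hbc'⟩, hpb⟩

theorem restrict_mem_APfin {s : Word} {v u : Finset (Finset ℕ)} (hv : v ∈ APfin s g)
    (hu : u ∈ APfin s g) (hvu : Refines v u) {c : Finset ℕ} (hc : c ∈ u) :
    (v.filter fun b => b ⊆ c) ∈ APfin s c :=
  mem_APfin.2 ⟨restrict_partition (mem_APfin.1 hv).1 (mem_APfin.1 hu).1 hvu hc,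
    admissible_subset (mem_APfin.1 hv).2 (Finset.filter_subset _ _)⟩

theorem restrict_self {v : Finset (Finset ℕ)} (hv : IsPartitionOn g v) {c : Finset ℕ}
    (hc : c ∈ v) : (v.filter fun b => b ⊆ c) = {c} := by
  ext b
  simp only [Finset.mem_filter, Finset.mem_singleton]
  constructor
  · rintro ⟨hb, hbc⟩
    obtain ⟨p, hp⟩ := hv.1 b hb
    exact block_unique hv hb hc hp (hbc hp)
  · rintro rfl
    exact ⟨hc, Finset.Subset.refl _⟩

theorem restrict_filter_eq {v : Finset (Finset ℕ)} {c d : Finset ℕ} (hdc : d ⊆ c) :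
    ((v.filter fun b => b ⊆ c).filter fun b => b ⊆ d) = v.filter fun b => b ⊆ d := by
  rw [Finset.filter_filter]
  apply Finset.filter_congr
  intro b _
  constructor
  · rintro ⟨_, h⟩; exact h
  · intro h; exact ⟨h.trans hdc, h⟩

/-- admissibility can be checked componentwise below an admissible partition -/
theorem admissible_of_components {s : Word} {t u : Finset (Finset ℕ)}
    (hu : IsPartitionOn g u) (hua : Admissible s u) (htu : Refines t u)
    (ht : ∀ b ∈ t, b.Nonempty)
    (hcomp : ∀ c ∈ u, Admissible s (t.filter fun b => b ⊆ c)) : Admissible s t := by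
  intro b hb b' hb' hne j hjb hw hin
  obtain ⟨c, hc, hbc⟩ := htu b hb
  obtain ⟨c', hc', hbc'⟩ := htu b' hb'
  by_cases hcc : c = c'
  · subst hcc
    exact hcomp c hc b (Finset.mem_filter.2 ⟨hb, hbc⟩) b'
      (Finset.mem_filter.2 ⟨hb', hbc'⟩) hne j hjb hw hin
  · obtain ⟨hjnot, i, hi, k, hk, hij, hjk⟩ := hin
    apply hua c hc c' hc' hcc j (hbc hjb) hw
    refine ⟨?_, i, hbc' hi, k, hbc' hk, hij, hjk⟩
    intro hjc'
    exact (Finset.disjoint_left.1 (hu.2.1 hc hc' hcc) (hbc hjb)) hjc'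

theorem erase_partition {u : Finset (Finset ℕ)} (hu : IsPartitionOn g u)
    {c₀ : Finset ℕ} (hc₀ : c₀ ∈ u) : IsPartitionOn (g \ c₀) (u.erase c₀) := by
  refine ⟨fun b hb => hu.1 b (Finset.mem_of_mem_erase hb), ?_, ?_⟩
  · intro b hb b' hb' hne
    exact hu.2.1 (Finset.mem_coe.2 (Finset.mem_of_mem_erase (Finset.mem_coe.1 hb)))
      (Finset.mem_coe.2 (Finset.mem_of_mem_erase (Finset.mem_coe.1 hb'))) hne
  · apply Finset.Subset.antisymm
    · intro p hp
      rw [Finset.mem_sup] at hp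
      obtain ⟨b, hb, hpb⟩ := hp
      obtain ⟨hbne, hbu⟩ := Finset.mem_erase.1 hb
      refine Finset.mem_sdiff.2 ⟨block_sub hu hbu hpb, fun hpc₀ => ?_⟩
      exact hbne (block_unique hu hbu hc₀ hpb hpc₀)
    · intro p hp
      obtain ⟨hpg, hpc₀⟩ := Finset.mem_sdiff.1 hp
      obtain ⟨b, hb, hpb⟩ := exists_block hu hpg
      have hbc₀ : b ≠ c₀ := fun h => hpc₀ (h ▸ hpb)
      rw [Finset.mem_sup]
      exact ⟨b, Finset.mem_erase.2 ⟨hbc₀, hb⟩, hpb⟩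

theorem erase_mem_APfin {s : Word} {u : Finset (Finset ℕ)} (hu : u ∈ APfin s g)
    {c₀ : Finset ℕ} (hc₀ : c₀ ∈ u) : u.erase c₀ ∈ APfin s (g \ c₀) :=
  mem_APfin.2 ⟨erase_partition (mem_APfin.1 hu).1 hc₀,
    admissible_subset (mem_APfin.1 hu).2 (Finset.erase_subset _ _)⟩


section Split

variable {s : Word} {g : Finset ℕ} {v u t : Finset (Finset ℕ)} {c₀ : Finset ℕ}

theorem compl_restrict_partition (ht : IsPartitionOn g t) (hu : IsPartitionOn g u)
    (htu : Refines t u) (hc₀ : c₀ ∈ u) :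
    IsPartitionOn (g \ c₀) (t.filter fun b => ¬ b ⊆ c₀) := by
  refine ⟨fun b hb => ht.1 b (Finset.mem_filter.1 hb).1, ?_, ?_⟩
  · intro b hb b' hb' hne
    exact ht.2.1 (Finset.mem_coe.2 (Finset.filter_subset _ _ (Finset.mem_coe.1 hb)))
      (Finset.mem_coe.2 (Finset.filter_subset _ _ (Finset.mem_coe.1 hb'))) hne
  · apply Finset.Subset.antisymm
    · intro p hp
      rw [Finset.mem_sup] at hp
      obtain ⟨b, hb, hpb⟩ := hp
      obtain ⟨hbt, hbnc⟩ := Finset.mem_filter.1 hb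
      obtain ⟨c', hc', hbc'⟩ := htu b hbt
      have hcne : c' ≠ c₀ := fun h => hbnc (h ▸ hbc')
      refine Finset.mem_sdiff.2 ⟨block_sub ht hbt hpb, fun hpc₀ => ?_⟩
      exact (Finset.disjoint_left.1 (hu.2.1 hc' hc₀ hcne) (hbc' hpb)) hpc₀
    · intro p hp
      obtain ⟨hpg, hpc₀⟩ := Finset.mem_sdiff.1 hp
      obtain ⟨b, hb, hpb⟩ := exists_block ht hpg
      have : ¬ b ⊆ c₀ := fun h => hpc₀ (h hpb)
      rw [Finset.mem_sup]
      exact ⟨b, Finset.mem_filter.2 ⟨hb, this⟩, hpb⟩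

theorem refines_restrict (hv : IsPartitionOn g v) (ht : IsPartitionOn g t)
    (hu : IsPartitionOn g u) (hvt : Refines v t) (htu : Refines t u) (hc₀ : c₀ ∈ u) :
    Refines (v.filter fun b => b ⊆ c₀) (t.filter fun b => b ⊆ c₀) := by
  intro b hb
  obtain ⟨hbv, hbc₀⟩ := Finset.mem_filter.1 hb
  obtain ⟨d, hd, hbd⟩ := hvt b hbv
  obtain ⟨c', hc', hdc'⟩ := htu d hd
  obtain ⟨p, hp⟩ := hv.1 b hbv
  have : c' = c₀ := block_unique hu hc' hc₀ (hdc' (hbd hp)) (hbc₀ hp)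
  exact ⟨d, Finset.mem_filter.2 ⟨hd, this ▸ hdc'⟩, hbd⟩

theorem refines_compl_restrict (hvt : Refines v t) :
    Refines (v.filter fun b => ¬ b ⊆ c₀) (t.filter fun b => ¬ b ⊆ c₀) := by
  intro b hb
  obtain ⟨hbv, hbnc⟩ := Finset.mem_filter.1 hb
  obtain ⟨d, hd, hbd⟩ := hvt b hbv
  have : ¬ d ⊆ c₀ := fun h => hbnc (hbd.trans h)
  exact ⟨d, Finset.mem_filter.2 ⟨hd, this⟩, hbd⟩

theorem refines_compl_erase (htu : Refines t u) :
    Refines (t.filter fun b => ¬ b ⊆ c₀) (u.erase c₀) := by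
  intro b hb
  obtain ⟨hbt, hbnc⟩ := Finset.mem_filter.1 hb
  obtain ⟨c', hc', hbc'⟩ := htu b hbt
  have : c' ≠ c₀ := fun h => hbnc (h ▸ hbc')
  exact ⟨c', Finset.mem_erase.2 ⟨this, hc'⟩, hbc'⟩

theorem compl_restrict_mem_APfin (ht : t ∈ APfin s g) (hu : u ∈ APfin s g)
    (htu : Refines t u) (hc₀ : c₀ ∈ u) :
    (t.filter fun b => ¬ b ⊆ c₀) ∈ APfin s (g \ c₀) :=
  mem_APfin.2 ⟨compl_restrict_partition (mem_APfin.1 ht).1 (mem_APfin.1 hu).1 htu hc₀,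
    admissible_subset (mem_APfin.1 ht).2 (Finset.filter_subset _ _)⟩

-- facts about blocks of partitions on c₀ resp. g \ c₀
theorem blocks_sub_of_partition {t₁ : Finset (Finset ℕ)} (ht₁ : IsPartitionOn c₀ t₁)
    {d : Finset ℕ} (hd : d ∈ t₁) : d ⊆ c₀ := block_sub ht₁ hd

theorem blocks_not_sub {t₂ : Finset (Finset ℕ)} (ht₂ : IsPartitionOn (g \ c₀) t₂)
    {d : Finset ℕ} (hd : d ∈ t₂) : ¬ d ⊆ c₀ := by
  intro h
  obtain ⟨p, hp⟩ := ht₂.1 d hd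
  exact (Finset.mem_sdiff.1 (block_sub ht₂ hd hp)).2 (h hp)

/-- reassembling a partition from its two parts -/
theorem union_mem_APfin {t₁ t₂ : Finset (Finset ℕ)} (hu : u ∈ APfin s g) (hc₀ : c₀ ∈ u)
    (ht₁ : t₁ ∈ APfin s c₀) (ht₂ : t₂ ∈ APfin s (g \ c₀))
    (ht₂u : Refines t₂ (u.erase c₀)) :
    t₁ ∪ t₂ ∈ APfin s g ∧ Refines (t₁ ∪ t₂) u ∧
      ((t₁ ∪ t₂).filter fun b => b ⊆ c₀) = t₁ ∧
      ((t₁ ∪ t₂).filter fun b => ¬ b ⊆ c₀) = t₂ := by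
  have huP := (mem_APfin.1 hu).1
  have ht₁P := (mem_APfin.1 ht₁).1
  have ht₂P := (mem_APfin.1 ht₂).1
  have hc₀g : c₀ ⊆ g := block_sub huP hc₀
  have hsub1 : ∀ d ∈ t₁, d ⊆ c₀ := fun d hd => block_sub ht₁P hd
  have hsub2 : ∀ d ∈ t₂, ¬ d ⊆ c₀ := fun d hd => blocks_not_sub ht₂P hd
  have hsub2' : ∀ d ∈ t₂, d ⊆ g \ c₀ := fun d hd => block_sub ht₂P hd
  have hfilt1 : ((t₁ ∪ t₂).filter fun b => b ⊆ c₀) = t₁ := by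
    rw [Finset.filter_union, Finset.filter_true_of_mem hsub1,
      Finset.filter_false_of_mem hsub2, Finset.union_empty]
  have hfilt2 : ((t₁ ∪ t₂).filter fun b => ¬ b ⊆ c₀) = t₂ := by
    rw [Finset.filter_union, Finset.filter_false_of_mem (fun d hd h => h (hsub1 d hd)),
      Finset.filter_true_of_mem hsub2, Finset.empty_union]
  have hrt : Refines (t₁ ∪ t₂) u := by
    intro d hd
    rcases Finset.mem_union.1 hd with hd | hd
    · exact ⟨c₀, hc₀, hsub1 d hd⟩
    · obtain ⟨c', hc', hdc'⟩ := ht₂u d hd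
      exact ⟨c', Finset.mem_of_mem_erase hc', hdc'⟩
  have hP : IsPartitionOn g (t₁ ∪ t₂) := by
    refine ⟨?_, ?_, ?_⟩
    · intro b hb
      rcases Finset.mem_union.1 hb with hb | hb
      · exact ht₁P.1 b hb
      · exact ht₂P.1 b hb
    · intro b hb b' hb' hne
      rcases Finset.mem_union.1 (Finset.mem_coe.1 hb) with hb1 | hb1 <;>
        rcases Finset.mem_union.1 (Finset.mem_coe.1 hb') with hb2 | hb2
      · exact ht₁P.2.1 (Finset.mem_coe.2 hb1) (Finset.mem_coe.2 hb2) hne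
      · exact Finset.disjoint_left.2 fun p hp hp' =>
          (Finset.mem_sdiff.1 (hsub2' b' hb2 hp')).2 (hsub1 b hb1 hp)
      · exact Finset.disjoint_left.2 fun p hp hp' =>
          (Finset.mem_sdiff.1 (hsub2' b hb1 hp)).2 (hsub1 b' hb2 hp')
      · exact ht₂P.2.1 (Finset.mem_coe.2 hb1) (Finset.mem_coe.2 hb2) hne
    · rw [Finset.sup_union, ht₁P.2.2, ht₂P.2.2]
      rw [Finset.sup_eq_union, Finset.union_sdiff_self_eq_union]
      exact Finset.union_eq_right.2 hc₀g
  have hadm : Admissible s (t₁ ∪ t₂) := by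
    apply admissible_of_components huP (mem_APfin.1 hu).2 hrt hP.1
    intro c hc
    by_cases hcc : c = c₀
    · subst hcc
      rw [hfilt1]
      exact (mem_APfin.1 ht₁).2
    · have : ((t₁ ∪ t₂).filter fun b => b ⊆ c) = t₂.filter fun b => b ⊆ c := by
        rw [Finset.filter_union]
        rw [Finset.filter_false_of_mem, Finset.empty_union]
        intro d hd hdc
        obtain ⟨p, hp⟩ := ht₁P.1 d hd
        exact (Finset.disjoint_left.1 (huP.2.1 hc₀ hc (Ne.symm hcc)) (hsub1 d hd hp)) (hdc hp)
      rw [this]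
      exact admissible_subset (mem_APfin.1 ht₂).2 (Finset.filter_subset _ _)
  exact ⟨mem_APfin.2 ⟨hP, hadm⟩, hrt, hfilt1, hfilt2⟩

end Split


theorem partition_on_empty {P : Finset (Finset ℕ)} (hP : IsPartitionOn ∅ P) : P = ∅ := by
  rw [Finset.eq_empty_iff_forall_notMem]
  intro b hb
  obtain ⟨p, hp⟩ := hP.1 b hb
  simpa using block_sub hP hb hp

theorem empty_mem_APfin {s : Word} : (∅ : Finset (Finset ℕ)) ∈ APfin s ∅ := by
  refine mem_APfin.2 ⟨⟨?_, ?_, ?_⟩, ?_⟩ <;> simp [Set.PairwiseDisjoint, Set.Pairwise, Admissible]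

/-- multiplicativity of the Möbius function over the blocks of the coarser partition -/
theorem mult {s : Word} {m : Finset ℕ → Finset (Finset ℕ) → Finset (Finset ℕ) → ℂ}
    (hm : ∀ g : Finset ℕ, IsMobius s g (m g)) :
    ∀ (N n : ℕ) (g : Finset ℕ) (v u : Finset (Finset ℕ)), g.card ≤ N →
      ((APfin s g).filter fun t => Refines v t ∧ Refines t u).card ≤ n →
      v ∈ APfin s g → u ∈ APfin s g → Refines v u →
      m g v u = ∏ c ∈ u, m c (v.filter fun b => b ⊆ c) {c} := by
  intro N
  induction N with
  | zero =>
    intro n g v u hgN _ hv hu _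
    have hg : g = ∅ := Finset.card_eq_zero.1 (Nat.le_zero.1 hgN)
    subst hg
    have hu0 : u = ∅ := partition_on_empty (mem_APfin.1 hu).1
    have hv0 : v = ∅ := partition_on_empty (mem_APfin.1 hv).1
    subst hu0; subst hv0
    rw [Finset.prod_empty]
    exact (hm ∅).1 ∅ empty_mem_APfin
  | succ N IHN =>
    intro n
    induction n with
    | zero =>
      intro g v u _ hcard hv _ hvu
      exfalso
      have hvI : v ∈ (APfin s g).filter fun t => Refines v t ∧ Refines t u :=
        Finset.mem_filter.2 ⟨hv, refines_refl v, hvu⟩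
      have := Finset.card_pos.2 ⟨v, hvI⟩
      omega
    | succ n IHn =>
      intro g v u hgN hcard hv hu hvu
      have hvP := (mem_APfin.1 hv).1
      have huP := (mem_APfin.1 hu).1
      by_cases hutop : u = {g}
      · subst hutop
        rw [Finset.prod_singleton,
          Finset.filter_true_of_mem (fun b hb => block_sub hvP hb)]
      by_cases hveq : v = u
      · subst hveq
        rw [(hm g).1 v hv]
        symm
        apply Finset.prod_eq_one
        intro c hc
        rw [restrict_self hvP hc]
        exact (hm c).1 {c} (top_mem_APfin (hvP.1 c hc))
      -- choose a block c₀ of u on which v is nontrivial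
      have hex : ∃ c₀ ∈ u, (v.filter fun b => b ⊆ c₀) ≠ {c₀} := by
        by_contra hcon
        push_neg at hcon
        apply hveq
        apply Finset.Subset.antisymm
        · intro b hb
          obtain ⟨c, hc, hbc⟩ := hvu b hb
          have hb' : b ∈ v.filter fun b => b ⊆ c := Finset.mem_filter.2 ⟨hb, hbc⟩
          rw [hcon c hc] at hb'
          rw [Finset.mem_singleton.1 hb']
          exact hc
        · intro c hc
          have : c ∈ v.filter fun b => b ⊆ c := by
            rw [hcon c hc]; exact Finset.mem_singleton_self c
          exact (Finset.mem_filter.1 this).1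
      obtain ⟨c₀, hc₀, hc₀ne⟩ := hex
      have hc₀g : c₀ ⊆ g := block_sub huP hc₀
      have hc₀nonempty : c₀.Nonempty := huP.1 c₀ hc₀
      have hc₀ssub : c₀ ≠ g := by
        rintro rfl
        exact hutop (eq_top_of_top_mem huP hc₀)
      have hc₀card : c₀.card ≤ N := by
        have := Finset.card_lt_card (Finset.ssubset_iff_subset_ne.2 ⟨hc₀g, hc₀ssub⟩)
        omega
      have hv₁AP : (v.filter fun b => b ⊆ c₀) ∈ APfin s c₀ :=
        restrict_mem_APfin hv hu hvu hc₀
      have hv₁P := (mem_APfin.1 hv₁AP).1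
      -- the closed interval sum vanishes
      have key : ∑ t ∈ (APfin s g).filter (fun t => Refines v t ∧ Refines t u),
          ∏ d ∈ t, m d (v.filter fun b => b ⊆ d) {d} = 0 := by
        have hbij : ∑ t ∈ (APfin s g).filter (fun t => Refines v t ∧ Refines t u),
            ∏ d ∈ t, m d (v.filter fun b => b ⊆ d) {d}
            = ∑ p ∈ ((APfin s c₀).filter fun t => Refines (v.filter fun b => b ⊆ c₀) t ∧
                  Refines t {c₀}) ×ˢ
                ((APfin s (g \ c₀)).filter fun t =>
                  Refines (v.filter fun b => ¬ b ⊆ c₀) t ∧ Refines t (u.erase c₀)),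
                (∏ d ∈ p.1, m d (v.filter fun b => b ⊆ d) {d}) *
                  (∏ d ∈ p.2, m d (v.filter fun b => b ⊆ d) {d}) := by
          apply Finset.sum_nbij'
            (i := fun t => (t.filter fun b => b ⊆ c₀, t.filter fun b => ¬ b ⊆ c₀))
            (j := fun p => p.1 ∪ p.2)
          · intro t ht
            obtain ⟨htAP, hvt, htu⟩ := Finset.mem_filter.1 ht
            have htP := (mem_APfin.1 htAP).1
            refine Finset.mem_product.2 ⟨Finset.mem_filter.2 ⟨?_, ?_, ?_⟩,
              Finset.mem_filter.2 ⟨?_, ?_, ?_⟩⟩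
            · exact restrict_mem_APfin htAP hu htu hc₀
            · exact refines_restrict hvP htP huP hvt htu hc₀
            · exact refines_top (restrict_partition htP huP htu hc₀)
            · exact compl_restrict_mem_APfin htAP hu htu hc₀
            · exact refines_compl_restrict hvt
            · exact refines_compl_erase htu
          · intro p hp
            obtain ⟨hp1, hp2⟩ := Finset.mem_product.1 hp
            obtain ⟨hp1AP, hvp1, _⟩ := Finset.mem_filter.1 hp1
            obtain ⟨hp2AP, hvp2, hp2u⟩ := Finset.mem_filter.1 hp2
            obtain ⟨hmem, href, _, _⟩ := union_mem_APfin hu hc₀ hp1AP hp2AP hp2u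
            refine Finset.mem_filter.2 ⟨hmem, ?_, href⟩
            intro b hb
            by_cases hbc : b ⊆ c₀
            · obtain ⟨d, hd, hbd⟩ := hvp1 b (Finset.mem_filter.2 ⟨hb, hbc⟩)
              exact ⟨d, Finset.mem_union_left _ hd, hbd⟩
            · obtain ⟨d, hd, hbd⟩ := hvp2 b (Finset.mem_filter.2 ⟨hb, hbc⟩)
              exact ⟨d, Finset.mem_union_right _ hd, hbd⟩
          · intro t _
            exact Finset.filter_union_filter_not_eq _ t
          · intro p hp
            obtain ⟨hp1, hp2⟩ := Finset.mem_product.1 hp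
            obtain ⟨hp1AP, _, _⟩ := Finset.mem_filter.1 hp1
            obtain ⟨hp2AP, _, hp2u⟩ := Finset.mem_filter.1 hp2
            obtain ⟨_, _, hf1, hf2⟩ := union_mem_APfin hu hc₀ hp1AP hp2AP hp2u
            exact Prod.ext hf1 hf2
          · intro t ht
            obtain ⟨htAP, hvt, htu⟩ := Finset.mem_filter.1 ht
            have hdisj : Disjoint (t.filter fun b => b ⊆ c₀)
                (t.filter fun b => ¬ b ⊆ c₀) := Finset.disjoint_filter_filter_not t t _
            rw [← Finset.prod_union hdisj, Finset.filter_union_filter_not_eq]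
        rw [hbij, Finset.sum_product]
        dsimp only
        rw [← Finset.sum_mul_sum]
        have hfac1 : ∑ t₁ ∈ (APfin s c₀).filter (fun t =>
            Refines (v.filter fun b => b ⊆ c₀) t ∧ Refines t {c₀}),
            ∏ d ∈ t₁, m d (v.filter fun b => b ⊆ d) {d} = 0 := by
          have hcongr : ∀ t₁ ∈ (APfin s c₀).filter (fun t =>
              Refines (v.filter fun b => b ⊆ c₀) t ∧ Refines t {c₀}),
              ∏ d ∈ t₁, m d (v.filter fun b => b ⊆ d) {d}
                = m c₀ (v.filter fun b => b ⊆ c₀) t₁ := by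
            intro t₁ ht₁
            obtain ⟨ht₁AP, hv₁t₁, _⟩ := Finset.mem_filter.1 ht₁
            have ht₁P := (mem_APfin.1 ht₁AP).1
            rw [IHN (((APfin s c₀).filter fun t =>
                Refines (v.filter fun b => b ⊆ c₀) t ∧ Refines t t₁).card)
              c₀ (v.filter fun b => b ⊆ c₀) t₁ hc₀card le_rfl hv₁AP ht₁AP hv₁t₁]
            apply Finset.prod_congr rfl
            intro d hd
            rw [restrict_filter_eq (block_sub ht₁P hd)]
          rw [Finset.sum_congr rfl hcongr]
          exact sum_interval_zero (hm c₀) hv₁AP (top_mem_APfin hc₀nonempty)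
            (refines_top hv₁P) hc₀ne
        rw [hfac1, zero_mul]
      -- conclude via the recursion
      have hurec := (hm g).2 v hv u hu hvu hveq
      have hopen : ∀ t ∈ (APfin s g).filter
          (fun t => Refines v t ∧ Refines t u ∧ t ≠ u),
          m g v t = ∏ d ∈ t, m d (v.filter fun b => b ⊆ d) {d} := by
        intro t ht
        obtain ⟨htAP, hvt, htu, htne⟩ := Finset.mem_filter.1 ht
        have htP := (mem_APfin.1 htAP).1
        apply IHn g v t hgN _ hv htAP hvt
        -- interval below t is strictly smaller
        have hsub : (APfin s g).filter (fun y => Refines v y ∧ Refines y t) ⊆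
            ((APfin s g).filter fun y => Refines v y ∧ Refines y u).erase u := by
          intro y hy
          obtain ⟨hyAP, hvy, hyt⟩ := Finset.mem_filter.1 hy
          refine Finset.mem_erase.2 ⟨?_, Finset.mem_filter.2
            ⟨hyAP, hvy, refines_trans hyt htu⟩⟩
          rintro rfl
          exact htne (refines_antisymm htP huP htu hyt)
        have h1 := Finset.card_le_card hsub
        have h2 := Finset.card_erase_of_mem (Finset.mem_filter.2
          ⟨hu, hvu, refines_refl u⟩ :
          u ∈ (APfin s g).filter fun y => Refines v y ∧ Refines y u)
        omega
      rw [hurec, Finset.sum_congr rfl hopen]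
      -- split the closed sum
      have huI : u ∈ (APfin s g).filter fun t => Refines v t ∧ Refines t u :=
        Finset.mem_filter.2 ⟨hu, hvu, refines_refl u⟩
      rw [← Finset.add_sum_erase _ _ huI] at key
      have herase : ((APfin s g).filter fun t => Refines v t ∧ Refines t u).erase u =
          (APfin s g).filter fun t => Refines v t ∧ Refines t u ∧ t ≠ u := by
        ext t
        simp only [Finset.mem_erase, Finset.mem_filter]
        tauto
      rw [herase] at key
      linear_combination -key


theorem two_le_card {x : Finset (Finset ℕ)} (hx : IsPartitionOn g x) (hg : g.Nonempty)
    (hne : x ≠ {g}) : 2 ≤ x.card := by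
  rcases Nat.lt_or_ge x.card 2 with h | h
  · exfalso
    interval_cases hc : x.card
    · rw [Finset.card_eq_zero] at hc
      subst hc
      rw [← hx.2.2] at hg
      simpa using hg
    · obtain ⟨b, hb⟩ := Finset.card_eq_one.1 hc
      subst hb
      apply hne
      have : Finset.sup {b} id = b := Finset.sup_singleton
      rw [← hx.2.2, this]
  · exact h

/-- The key construction: a separating admissible partition with at least three blocks
has a proper non-separating admissible coarsening. -/
theorem star_construction {s : Word} {g : Finset ℕ} {x : Finset (Finset ℕ)}
    {b₁ b₂ A B : Finset ℕ} {j : ℕ}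
    (hx : x ∈ APfin s g) (hA : A ∈ x) (hB : B ∈ x) (hAB : A ≠ B)
    (hb₁A : b₁ ⊆ A) (hb₂B : b₂ ⊆ B)
    (h0 : 0 ∈ b₁) (hj₂ : j ∈ b₂) (hj₁ : j ∉ b₁) (hjmin : ∀ i < j, i ∈ b₁)
    (hcard : 3 ≤ x.card) :
    ∃ y ∈ APfin s g, Refines x y ∧ y ≠ {g} ∧ ∃ c ∈ y, b₁ ⊆ c ∧ b₂ ⊆ c := by
  have hxP := (mem_APfin.1 hx).1
  have hxA := (mem_APfin.1 hx).2
  have h0A : 0 ∈ A := hb₁A h0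
  have hjB : j ∈ B := hb₂B hj₂
  have hjpos : 0 < j := Nat.pos_of_ne_zero fun h => hj₁ (h ▸ h0)
  -- every block other than A, B lies strictly above j
  have hgtj : ∀ D ∈ x, D ≠ A → D ≠ B → ∀ q ∈ D, j < q := by
    intro D hD hDA hDB q hq
    rcases Nat.lt_trichotomy q j with h | h | h
    · exact absurd (block_unique hxP hD hA hq (hb₁A (hjmin q h))) hDA
    · exact absurd (block_unique hxP hD hB hq (h ▸ hjB)) hDB
    · exact h
  -- pick the block C (other than A, B) with the largest minimum
  have hRne : ((x.erase A).erase B).Nonempty := by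
    rw [← Finset.card_pos]
    have h1 := Finset.card_erase_of_mem hA
    have h2 : B ∈ x.erase A := Finset.mem_erase.2 ⟨Ne.symm hAB, hB⟩
    have h3 := Finset.card_erase_of_mem h2
    omega
  obtain ⟨C, hCR, hCmax⟩ := Finset.exists_max_image ((x.erase A).erase B)
    (fun D => D.min) hRne
  have hCB : C ≠ B := (Finset.mem_erase.1 hCR).1
  have hCA : C ≠ A := (Finset.mem_erase.1 (Finset.mem_of_mem_erase hCR)).1
  have hCx : C ∈ x := Finset.mem_of_mem_erase (Finset.mem_of_mem_erase hCR)
  have hCg : C ⊆ g := block_sub hxP hCx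
  have hCgt : ∀ q ∈ C, j < q := hgtj C hCx hCA hCB
  have h0g : 0 ∈ g := block_sub hxP hA h0A
  have h0C : 0 ∉ C := fun h => absurd (hCgt 0 h) (by omega)
  have hjC : j ∉ C := fun h => absurd (hCgt j h) (by omega)
  have h0gC : 0 ∈ g \ C := Finset.mem_sdiff.2 ⟨h0g, h0C⟩
  have hAC : ∀ q ∈ A, q ∉ C := fun q hq hqC =>
    Finset.disjoint_left.1 (hxP.2.1 hA hCx hCA.symm) hq hqC
  have hBC : ∀ q ∈ B, q ∉ C := fun q hq hqC =>
    Finset.disjoint_left.1 (hxP.2.1 hB hCx hCB.symm) hq hqC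
  have hAsub : A ⊆ g \ C := fun q hq =>
    Finset.mem_sdiff.2 ⟨block_sub hxP hA hq, hAC q hq⟩
  have hBsub : B ⊆ g \ C := fun q hq =>
    Finset.mem_sdiff.2 ⟨block_sub hxP hB hq, hBC q hq⟩
  refine ⟨{C, g \ C}, ?_, ?_, ?_, g \ C, by simp, hb₁A.trans hAsub, hb₂B.trans hBsub⟩
  · -- admissible partition
    have hCdisj : Disjoint C (g \ C) := Finset.disjoint_sdiff
    have hCne' : C ≠ g \ C := by
      intro h
      rw [← h] at h0gC
      exact h0C h0gC
    refine mem_APfin.2 ⟨⟨?_, ?_, ?_⟩, ?_⟩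
    · intro b hb
      rcases Finset.mem_insert.1 hb with rfl | hb
      · exact hxP.1 _ hCx
      · rw [Finset.mem_singleton.1 hb]
        exact ⟨0, h0gC⟩
    · intro b hb b' hb' hne
      simp only [Finset.coe_insert, Set.mem_insert_iff, Finset.coe_singleton,
        Set.mem_singleton_iff] at hb hb'
      rcases hb with rfl | rfl <;> rcases hb' with rfl | rfl
      · exact absurd rfl hne
      · exact hCdisj
      · exact hCdisj.symm
      · exact absurd rfl hne
    · rw [Finset.sup_insert, Finset.sup_singleton]
      exact Finset.union_sdiff_of_subset hCg
    · -- admissibility of {C, g \ C}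
      intro b hb b' hb' hne p hpb hw hin
      have hcases : (b = C ∧ b' = g \ C) ∨ (b = g \ C ∧ b' = C) := by
        rcases Finset.mem_insert.1 hb with rfl | hb <;>
          rcases Finset.mem_insert.1 hb' with h' | h'
        · exact absurd h'.symm hne
        · exact Or.inl ⟨rfl, Finset.mem_singleton.1 h'⟩
        · exact Or.inr ⟨Finset.mem_singleton.1 hb, h'⟩
        · rw [Finset.mem_singleton.1 hb, Finset.mem_singleton.1 h'] at hne
          exact absurd rfl hne
      obtain ⟨hjnot, i, hi, k, hk, hip, hpk⟩ := hin
      rcases hcases with ⟨hbe, hbe'⟩ | ⟨hbe, hbe'⟩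
      · rw [hbe] at hpb
        rw [hbe'] at hjnot hi hk
        -- the block D of x containing k
        have hkg : k ∈ g := (Finset.mem_sdiff.1 hk).1
        have hkC : k ∉ C := (Finset.mem_sdiff.1 hk).2
        obtain ⟨D, hD, hkD⟩ := exists_block hxP hkg
        have hDC : D ≠ C := fun h => hkC (h ▸ hkD)
        have hpD : p ∉ D := fun h =>
          Finset.disjoint_left.1 (hxP.2.1 hCx hD hDC.symm) hpb h
        by_cases hlow : ∃ q ∈ D, q < p
        · obtain ⟨q, hqD, hqp⟩ := hlow
          exact hxA C hCx D hD hDC.symm p hpb hw ⟨hpD, q, hqD, k, hkD, hqp, hpk⟩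
        · push_neg at hlow
          -- all of D is ≥ p, so D ≠ A, D ≠ B and min D ≥ p ≥ min C, contradiction
          have hpj : j < p := hCgt p hpb
          have hDA : D ≠ A := by
            rintro rfl
            exact absurd (hlow 0 h0A) (by omega)
          have hDB : D ≠ B := by
            rintro rfl
            exact absurd (hlow j hjB) (by omega)
          have hDR : D ∈ (x.erase A).erase B :=
            Finset.mem_erase.2 ⟨hDB, Finset.mem_erase.2 ⟨hDA, hD⟩⟩
          have h1 : (↑p : WithTop ℕ) ≤ D.min :=
            Finset.le_min fun a ha => WithTop.coe_le_coe.2 (hlow a ha)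
          have h2 : D.min ≤ C.min := hCmax D hDR
          have h3 : C.min ≤ (↑p : WithTop ℕ) := Finset.min_le hpb
          have : D.min = (↑p : WithTop ℕ) := le_antisymm (h2.trans h3) h1
          exact hpD (Finset.mem_of_min this)
      · rw [hbe] at hpb
        rw [hbe'] at hjnot hi hk
        have hpg : p ∈ g := (Finset.mem_sdiff.1 hpb).1
        obtain ⟨D, hD, hpD⟩ := exists_block hxP hpg
        have hDC : D ≠ C := fun h => hjnot (h ▸ hpD)
        exact hxA D hD C hCx hDC p hpD hw ⟨hjnot, i, hi, k, hk, hip, hpk⟩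
  · -- x refines y
    intro D hD
    by_cases hDC : D = C
    · exact ⟨C, Finset.mem_insert_self _ _, hDC ▸ Finset.Subset.refl D⟩
    · refine ⟨g \ C, by simp, fun q hq => Finset.mem_sdiff.2
        ⟨block_sub hxP hD hq, fun hqC =>
          Finset.disjoint_left.1 (hxP.2.1 hD hCx hDC) hq hqC⟩⟩
  · -- y ≠ {g}
    intro hy
    have : C = g := Finset.mem_singleton.1 (hy ▸ Finset.mem_insert_self C {g \ C})
    subst this
    simpa using h0gC


theorem meet_block_mem {S : Finset (Finset (Finset ℕ))} {g : Finset ℕ} {p : ℕ}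
    (hp : p ∈ g) :
    (g.filter fun q => ∀ P ∈ S, ∀ b ∈ P, p ∈ b → q ∈ b) ∈ meetF S g :=
  Finset.mem_image_of_mem _ hp

end APAux

open APAux

open scoped Classical in
/-- for `v < 1_s` with first two blocks `b₁` (the block containing the
least position) and `b₂` (the block containing the least position outside `b₁`),
`m(v|1_s) = −Σ m(v|u)`, the sum running over the dual atoms `u = (u₁,u₂)` of `AP(s)`
in which `b₁` and `b₂` are separated; here `m(v|u)` is the product over the blocks
`c` of `u` of the Möbius functions of `AP(c)` between `v ∩ c` and the one-block
partition of `c`. -/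
theorem mobius_dual_atom_formula (s : Word) (hs : s ≠ [])
    (m : Finset ℕ → Finset (Finset ℕ) → Finset (Finset ℕ) → ℂ)
    (hm : ∀ g : Finset ℕ, IsMobius s g (m g))
    (v : Finset (Finset ℕ))
    (hv : v ∈ APfin s (Finset.range s.length))
    (hvtop : v ≠ {Finset.range s.length})
    (b₁ b₂ : Finset ℕ) (hb₁ : b₁ ∈ v) (hb₂ : b₂ ∈ v)
    (h0 : 0 ∈ b₁) (j : ℕ) (hj₂ : j ∈ b₂) (hj₁ : j ∉ b₁) (hjmin : ∀ i < j, i ∈ b₁) :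
    m (Finset.range s.length) v {Finset.range s.length} =
      -∑ u ∈ (APfin s (Finset.range s.length)).filter
          (fun u => u.card = 2 ∧ Refines v u ∧
            ∃ c₁ ∈ u, ∃ c₂ ∈ u, c₁ ≠ c₂ ∧ b₁ ⊆ c₁ ∧ b₂ ⊆ c₂),
        ∏ c ∈ u, m c (v.filter fun b => b ⊆ c) {c} := by
  set g := Finset.range s.length with hgdef
  have h0g : 0 ∈ g := Finset.mem_range.2 (List.length_pos_iff.2 hs)
  have hg : g.Nonempty := ⟨0, h0g⟩
  have hvP := (mem_APfin.1 hv).1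
  have hb₁ne : b₁.Nonempty := hvP.1 b₁ hb₁
  have hb₁₂ : b₁ ≠ b₂ := fun h => hj₁ (h ▸ hj₂)
  -- the element a: the smallest admissible coarsening of v joining b₁ and b₂
  set T₀ := (APfin s g).filter
    (fun y => Refines v y ∧ ∃ c ∈ y, b₁ ⊆ c ∧ b₂ ⊆ c) with hT₀def
  have hT₀part : ∀ P ∈ T₀, IsPartitionOn g P :=
    fun P hP => (mem_APfin.1 (Finset.mem_filter.1 hP).1).1
  set a := meetF T₀ g with hadef
  have haAP : a ∈ APfin s g := mem_APfin.2
    ⟨meet_partition hT₀part, meet_admissible hT₀part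
      (fun P hP => (mem_APfin.1 (Finset.mem_filter.1 hP).1).2)⟩
  have haP := (mem_APfin.1 haAP).1
  have hva : Refines v a := refines_meet hT₀part hvP
    (fun P hP => (Finset.mem_filter.1 hP).2.1)
  have ha_le : ∀ y ∈ T₀, Refines a y := fun y hy => meet_refines hT₀part hy
  have ha_block : ∃ c ∈ a, b₁ ⊆ c ∧ b₂ ⊆ c := by
    refine ⟨g.filter fun q => ∀ P ∈ T₀, ∀ b ∈ P, 0 ∈ b → q ∈ b, meet_block_mem h0g,
      ?_, ?_⟩
    · intro q hq
      refine Finset.mem_filter.2 ⟨block_sub hvP hb₁ hq, ?_⟩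
      intro P hP b hb h0b
      obtain ⟨hPAP, hvy, c, hc, h1, h2⟩ := Finset.mem_filter.1 hP
      have : b = c := block_unique (mem_APfin.1 hPAP).1 hb hc h0b (h1 h0)
      exact this ▸ h1 hq
    · intro q hq
      refine Finset.mem_filter.2 ⟨block_sub hvP hb₂ hq, ?_⟩
      intro P hP b hb h0b
      obtain ⟨hPAP, hvy, c, hc, h1, h2⟩ := Finset.mem_filter.1 hP
      have : b = c := block_unique (mem_APfin.1 hPAP).1 hb hc h0b (h1 h0)
      exact this ▸ h2 hq
  have hane : v ≠ a := by
    intro h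
    obtain ⟨c, hc, h1, h2⟩ := ha_block
    rw [← h] at hc
    obtain ⟨p, hp⟩ := hb₁ne
    have e1 : b₁ = c := block_unique hvP hb₁ hc hp (h1 hp)
    have e2 : b₂ = c := block_unique hvP hb₂ hc hj₂ (h2 hj₂)
    exact hb₁₂ (e1.trans e2.symm)
  -- Weisner's theorem applied with y = top
  have hw := weisner (hm g) hv haAP hva hane
    ((APfin s g).filter fun y' => Refines a y' ∧ Refines y' {g}).card
    {g} (top_mem_APfin hg) (refines_top haP) le_rfl
  -- identify the fiber
  set D := (APfin s g).filter
    (fun u => u.card = 2 ∧ Refines v u ∧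
      ∃ c₁ ∈ u, ∃ c₂ ∈ u, c₁ ≠ c₂ ∧ b₁ ⊆ c₁ ∧ b₂ ⊆ c₂) with hDdef
  have hfib : (APfin s g).filter
      (fun x => Refines v x ∧ joinF s g x a = {g}) = insert {g} D := by
    ext x
    simp only [Finset.mem_filter, Finset.mem_insert]
    constructor
    · rintro ⟨hxAP, hvx, hjoin⟩
      by_cases hxtop : x = {g}
      · exact Or.inl hxtop
      right
      rw [hDdef, Finset.mem_filter]
      obtain ⟨A, hA, hb₁A⟩ := hvx b₁ hb₁
      obtain ⟨B, hB, hb₂B⟩ := hvx b₂ hb₂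
      have hABne : A ≠ B := by
        rintro rfl
        have hxT₀ : x ∈ T₀ := Finset.mem_filter.2 ⟨hxAP, hvx, A, hA, hb₁A, hb₂B⟩
        have : joinF s g x a = x := joinF_eq_self hxAP (ha_le x hxT₀)
        rw [this] at hjoin
        exact hxtop hjoin
      have hcard2 : x.card = 2 := by
        have hge := two_le_card (mem_APfin.1 hxAP).1 hg hxtop
        by_contra hne2
        have h3 : 3 ≤ x.card := by omega
        obtain ⟨y, hyAP, hxy, hytop, c, hc, h1, h2⟩ :=
          star_construction hxAP hA hB hABne hb₁A hb₂B h0 hj₂ hj₁ hjmin h3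
        have hyT₀ : y ∈ T₀ :=
          Finset.mem_filter.2 ⟨hyAP, refines_trans hvx hxy, c, hc, h1, h2⟩
        have hjle : Refines (joinF s g x a) y := joinF_le hyAP hxy (ha_le y hyT₀)
        rw [hjoin] at hjle
        exact hytop (eq_top_of_refines_top (mem_APfin.1 hyAP).1 hg hjle)
      exact ⟨hxAP, hcard2, hvx, A, hA, B, hB, hABne, hb₁A, hb₂B⟩
    · rintro (rfl | hxD)
      · exact ⟨top_mem_APfin hg, refines_top hvP,
          joinF_eq_self (top_mem_APfin hg) (refines_top haP)⟩
      · rw [hDdef, Finset.mem_filter] at hxD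
        obtain ⟨hxAP, hcard2, hvx, c₁, hc₁, c₂, hc₂, hc₁₂, h1, h2⟩ := hxD
        refine ⟨hxAP, hvx, ?_⟩
        have hxP' := (mem_APfin.1 hxAP).1
        have hjn : joinF s g x a ≠ x := by
          intro h
          have hax : Refines a x := h ▸ refines_joinF_right haP
          obtain ⟨c, hc, hb1c, hb2c⟩ := ha_block
          obtain ⟨c', hc', hcc'⟩ := hax c hc
          obtain ⟨p, hp⟩ := hb₁ne
          have e1 : c₁ = c' := block_unique hxP' hc₁ hc' (h1 hp) (hcc' (hb1c hp))
          have e2 : c₂ = c' := block_unique hxP' hc₂ hc' (h2 hj₂) (hcc' (hb2c hj₂))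
          exact hc₁₂ (e1.trans e2.symm)
        exact coarsen_two_blocks hxP' (mem_APfin.1 (joinF_mem hxP' haP)).1 hcard2
          (refines_joinF_left hxP') hjn
  have htopD : {g} ∉ D := by
    intro h
    rw [hDdef, Finset.mem_filter] at h
    have := h.2.1
    simp at this
  rw [hfib, Finset.sum_insert htopD] at hw
  have hsummand : ∀ u ∈ D, m g v u = ∏ c ∈ u, m c (v.filter fun b => b ⊆ c) {c} := by
    intro u huD
    rw [hDdef, Finset.mem_filter] at huD
    obtain ⟨huAP, _, hvu', _⟩ := huD
    exact mult hm g.card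
      ((APfin s g).filter fun t => Refines v t ∧ Refines t u).card g v u
      le_rfl le_rfl hv huAP hvu'
  rw [← Finset.sum_congr rfl hsummand]
  linear_combination hw
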